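/- arXiv:2104.07895 — 2 statements merged into one kernel-verified Lean document; each statement's English description precedes it below -/
import Mathlib

section
/- For every a ∈ B_int and every b ∈ B_half, the segment from a to b is a face of the Delone polytope of D_{2m}^* centered at u: IsExtreme ℝ (convexHull ℝ (B_int ∪ B_half)) (segment ℝ a b). (These edges between the two cubes of the free sum are the edges giving rise to the half-integer vertices of the red Venkov graph of D_{2m}^*.) -/
/-!
Every vertex of either cube lies at distance `√m / 2` from `u` (this is where `|S| = |Sᶜ| = m`
enters), and `x - u ⟂ y - u` for `x ∈ B_int`, `y ∈ B_half` (disjoint supports). Hence, for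
`w = (a - u) + (b - u)`, polarization gives `⟪w, x - u⟫ = m / 4 - ‖a - x‖² / 2` on `B_int` and
`m / 4 - ‖b - x‖² / 2` on `B_half`, so `⟪w, ·⟫` attains its maximum over `B_int ∪ B_half` exactly
at `a` and `b`. The face of a convex hull cut out by a supporting hyperplane is the hull of the
generating points on that hyperplane, here the segment `[a, b]`.
-/

open Set Finset

open scoped RealInnerProductSpace

section LinearFace

variable {𝕜 E : Type*} [Field 𝕜] [LinearOrder 𝕜] [IsStrictOrderedRing 𝕜]
  [AddCommGroup E] [Module 𝕜 E] {l : E →ₗ[𝕜] 𝕜} {M : 𝕜}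

theorem isExtreme_sep_eq_of_forall_le {A : Set E} (hA : ∀ x ∈ A, l x ≤ M) :
    IsExtreme 𝕜 A {x ∈ A | l x = M} := by
  refine ⟨sep_subset _ _, fun x₁ hx₁ x₂ hx₂ x ⟨_, hx⟩ ⟨a, b, ha, hb, hab, hx_eq⟩ => ?_⟩
  have hcomb : a * l x₁ + b * l x₂ = M := by
    rw [← hx, ← hx_eq, map_add, map_smul, map_smul, smul_eq_mul, smul_eq_mul]
  have hslack : a * (M - l x₁) + b * (M - l x₂) = 0 := by linear_combination M * hab - hcomb
  have h₂ : 0 ≤ b * (M - l x₂) := mul_nonneg hb.le (sub_nonneg.2 (hA x₂ hx₂))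
  exact ⟨hx₁, le_antisymm (hA x₁ hx₁) (by nlinarith)⟩

theorem convexHull_sep_eq_of_forall_le {s : Set E} (hs : ∀ x ∈ s, l x ≤ M) :
    convexHull 𝕜 {x ∈ s | l x = M} = {x ∈ convexHull 𝕜 s | l x = M} := by
  refine Subset.antisymm (convexHull_min (fun x hx => ⟨subset_convexHull 𝕜 s hx.1, hx.2⟩)
    ((convex_convexHull 𝕜 s).inter (convex_hyperplane l.isLinear M))) ?_
  rintro x ⟨hx, hlx⟩
  rw [_root_.convexHull_eq] at hx
  obtain ⟨ι, t, w, z, hw₀, hw₁, hz, rfl⟩ := hx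
  have hslack : ∀ i ∈ t, w i * (M - l (z i)) = 0 := by
    refine (sum_eq_zero_iff_of_nonneg fun i hi => mul_nonneg (hw₀ i hi)
      (sub_nonneg.2 (hs _ (hz i hi)))).1 ?_
    rw [centerMass_eq_of_sum_1 _ _ hw₁, map_sum] at hlx
    simp only [map_smul, smul_eq_mul] at hlx
    simp only [mul_sub, sum_sub_distrib, ← sum_mul, hw₁, one_mul, hlx, sub_self]
  classical
  rw [← centerMass_filter_ne_zero]
  refine centerMass_mem_convexHull _ (fun i hi => hw₀ i (mem_filter.1 hi).1)
    (by rw [sum_filter_ne_zero, hw₁]; exact one_pos) fun i hi => ?_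
  obtain ⟨hi, hwi⟩ := mem_filter.1 hi
  exact ⟨hz i hi, by linarith [(mul_eq_zero.1 (hslack i hi)).resolve_left hwi]⟩

theorem isExtreme_convexHull_sep_eq_of_forall_le {s : Set E} (hs : ∀ x ∈ s, l x ≤ M) :
    IsExtreme 𝕜 (convexHull 𝕜 s) (convexHull 𝕜 {x ∈ s | l x = M}) := by
  rw [convexHull_sep_eq_of_forall_le hs]
  exact isExtreme_sep_eq_of_forall_le fun x hx =>
    convexHull_min hs (convex_halfSpace_le l.isLinear M) hx

end LinearFace

section CubeVertices

variable {ι : Type*} [Fintype ι]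

def cubeVertices (T : Finset ι) (u : EuclideanSpace ℝ ι) (r : ℝ) : Set (EuclideanSpace ℝ ι) :=
  {x | (∀ i ∉ T, x i = u i) ∧ ∀ i ∈ T, |x i - u i| = r}

variable {T : Finset ι} {u x y a b : EuclideanSpace ℝ ι} {r r' : ℝ}

theorem cubeVertices_compl [DecidableEq ι] (T : Finset ι) (u : EuclideanSpace ℝ ι) (r : ℝ) :
    cubeVertices Tᶜ u r = {x | (∀ i ∈ T, x i = u i) ∧ ∀ i ∉ T, |x i - u i| = r} := by
  ext x
  simp only [cubeVertices, mem_ofPred_eq, Finset.mem_compl, not_not]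

theorem norm_sub_sq_of_mem_cubeVertices (hx : x ∈ cubeVertices T u r) :
    ‖x - u‖ ^ 2 = T.card * r ^ 2 := by
  rw [EuclideanSpace.norm_sq_eq, ← sum_subset (subset_univ T) fun i _ hi => by
    simp [hx.1 i hi]]
  simp only [Real.norm_eq_abs, PiLp.sub_apply]
  rw [sum_congr rfl fun i hi => by rw [hx.2 i hi], sum_const, nsmul_eq_mul]

theorem inner_sub_eq_zero_of_mem_cubeVertices_compl [DecidableEq ι]
    (hx : x ∈ cubeVertices T u r) (hy : y ∈ cubeVertices Tᶜ u r') : ⟪x - u, y - u⟫ = 0 := by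
  rw [PiLp.inner_apply]
  refine sum_eq_zero fun i _ => ?_
  by_cases hi : i ∈ T
  · simp [hy.1 i (fun h => Finset.mem_compl.1 h hi)]
  · simp [hx.1 i hi]

theorem inner_add_sub_of_mem_cubeVertices [DecidableEq ι] (ha : a ∈ cubeVertices T u r)
    (hx : x ∈ cubeVertices T u r) (hb : b ∈ cubeVertices Tᶜ u r') :
    ⟪(a - u) + (b - u), x - u⟫ = T.card * r ^ 2 - ‖a - x‖ ^ 2 / 2 := by
  have hax : a - x = (a - u) - (x - u) := by abel
  rw [inner_add_left, real_inner_comm (x - u) (b - u),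
    inner_sub_eq_zero_of_mem_cubeVertices_compl hx hb, hax, norm_sub_sq_real,
    norm_sub_sq_of_mem_cubeVertices ha, norm_sub_sq_of_mem_cubeVertices hx]
  ring

theorem inner_add_sub_le_of_mem_cubeVertices [DecidableEq ι] (ha : a ∈ cubeVertices T u r)
    (hb : b ∈ cubeVertices Tᶜ u r') (hx : x ∈ cubeVertices T u r) :
    ⟪(a - u) + (b - u), x - u⟫ ≤ T.card * r ^ 2 := by
  rw [inner_add_sub_of_mem_cubeVertices ha hx hb]
  linarith [sq_nonneg ‖a - x‖]

theorem inner_add_sub_eq_iff_of_mem_cubeVertices [DecidableEq ι] (ha : a ∈ cubeVertices T u r)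
    (hb : b ∈ cubeVertices Tᶜ u r') (hx : x ∈ cubeVertices T u r) :
    ⟪(a - u) + (b - u), x - u⟫ = T.card * r ^ 2 ↔ x = a := by
  rw [inner_add_sub_of_mem_cubeVertices ha hx hb, sub_eq_self, div_eq_zero_iff, sq_eq_zero_iff,
    norm_sub_eq_zero_iff, eq_comm]
  norm_num

variable [DecidableEq ι] (hT : Tᶜ.card = T.card) (ha : a ∈ cubeVertices T u r)
  (hb : b ∈ cubeVertices Tᶜ u r)
include hT ha hb

theorem inner_le_of_mem_cubeVertices_union :
    ∀ x ∈ cubeVertices T u r ∪ cubeVertices Tᶜ u r,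
      ⟪(a - u) + (b - u), x⟫ ≤ ⟪(a - u) + (b - u), u⟫ + T.card * r ^ 2 := by
  have ha' : a ∈ cubeVertices Tᶜᶜ u r := by rwa [compl_compl]
  intro x hx
  rw [← sub_le_iff_le_add', ← inner_sub_right]
  rcases hx with hx | hx
  · exact inner_add_sub_le_of_mem_cubeVertices ha hb hx
  · rw [add_comm, ← hT]
    exact inner_add_sub_le_of_mem_cubeVertices hb ha' hx

theorem sep_inner_eq_cubeVertices_union :
    {x ∈ cubeVertices T u r ∪ cubeVertices Tᶜ u r |
      ⟪(a - u) + (b - u), x⟫ = ⟪(a - u) + (b - u), u⟫ + T.card * r ^ 2} = {a, b} := by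
  have ha' : a ∈ cubeVertices Tᶜᶜ u r := by rwa [compl_compl]
  ext x
  simp only [mem_sep_iff, mem_insert_iff, mem_singleton_iff, ← sub_eq_iff_eq_add',
    ← inner_sub_right]
  constructor
  · rintro ⟨hx | hx, hlx⟩
    · exact Or.inl ((inner_add_sub_eq_iff_of_mem_cubeVertices ha hb hx).1 hlx)
    · rw [add_comm, ← hT] at hlx
      exact Or.inr ((inner_add_sub_eq_iff_of_mem_cubeVertices hb ha' hx).1 hlx)
  · rintro (rfl | rfl)
    · exact ⟨Or.inl ha, (inner_add_sub_eq_iff_of_mem_cubeVertices ha hb ha).2 rfl⟩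
    · refine ⟨Or.inr hb, ?_⟩
      rw [add_comm, ← hT]
      exact (inner_add_sub_eq_iff_of_mem_cubeVertices hb ha' hb).2 rfl

end CubeVertices

theorem stmt_7_general (m : ℕ)
    (S : Finset (Fin (2 * m))) (hS : S.card = m)
    (u : EuclideanSpace ℝ (Fin (2 * m)))
    (Bhalf Bint : Set (EuclideanSpace ℝ (Fin (2 * m))))
    (hBhalf : Bhalf = {x : EuclideanSpace ℝ (Fin (2 * m)) |
      (∀ i ∈ S, x i = u i) ∧ (∀ i ∉ S, |x i - u i| = 1/2)})
    (hBint : Bint = {x : EuclideanSpace ℝ (Fin (2 * m)) |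
      (∀ i ∉ S, x i = u i) ∧ (∀ i ∈ S, |x i - u i| = 1/2)}) :
    ∀ a ∈ Bint, ∀ b ∈ Bhalf,
      IsExtreme ℝ (convexHull ℝ (Bint ∪ Bhalf)) (segment ℝ a b) := by
  obtain rfl : Bint = cubeVertices S u (1/2) := hBint
  rw [← cubeVertices_compl] at hBhalf
  subst hBhalf
  have hScompl : Sᶜ.card = S.card := by rw [card_compl, Fintype.card_fin, hS]; omega
  intro a ha b hb
  rw [← convexHull_pair, ← sep_inner_eq_cubeVertices_union hScompl ha hb]
  exact isExtreme_convexHull_sep_eq_of_forall_le (l := innerₗ _ ((a - u) + (b - u)))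
    (inner_le_of_mem_cubeVertices_union hScompl ha hb)

/-- For every vertex `a` of the integer cube and every vertex `b` of the half-integer cube,
the segment from `a` to `b` is a face of the Delone polytope (free sum) of `D_{2m}^*`
centered at `u`. -/
theorem stmt_7 (m : ℕ) (hm : 1 ≤ m)
    (S : Finset (Fin (2 * m))) (hS : S.card = m)
    (u : EuclideanSpace ℝ (Fin (2 * m)))
    (huS : ∀ i ∈ S, ∃ k : ℤ, u i = (k : ℝ) + 1/2)
    (huI : ∀ i ∉ S, ∃ k : ℤ, u i = (k : ℝ))
    (Bhalf Bint : Set (EuclideanSpace ℝ (Fin (2 * m))))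
    (hBhalf : Bhalf = {x : EuclideanSpace ℝ (Fin (2 * m)) |
      (∀ i ∈ S, x i = u i) ∧ (∀ i ∉ S, |x i - u i| = 1/2)})
    (hBint : Bint = {x : EuclideanSpace ℝ (Fin (2 * m)) |
      (∀ i ∉ S, x i = u i) ∧ (∀ i ∈ S, |x i - u i| = 1/2)}) :
    ∀ a ∈ Bint, ∀ b ∈ Bhalf,
      IsExtreme ℝ (convexHull ℝ (Bint ∪ Bhalf)) (segment ℝ a b) :=
  stmt_7_general m S hS u Bhalf Bint hBhalf hBint
end

section
/- Let W be any subset of the 16 vertices range b ∪ range (fun i => −b i) of the eight-dimensional cross-polytope and let P = convexHull ℝ W. Then every vertex of P fails to be joined by an edge to at most one other vertex: for all pairwise distinct x, y, z ∈ W, at least one of the segments from x to y and from x to z is a face of P, i.e. IsExtreme ℝ P (segment ℝ x y) or IsExtreme ℝ P (segment ℝ x z) holds. -/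
/-!
In the coordinates of the basis `b`, the cross-polytope is the unit `ℓ¹`-ball. For `i ≠ j` and
signs `ε, δ` the functional `ε xᵢ + δ xⱼ` is at most `1` on it, with equality exactly on the edge
`[ε bᵢ, δ bⱼ]`; so that edge is a face of the cross-polytope, hence of every `P` lying between
the two. Given `x = ε bᵢ`, the only other vertex with index `i` is `-x`, so one of `y, z` has a
different index.
-/

open Set

section SignedCoordinates

variable {ι : Type*} [Fintype ι] [DecidableEq ι] {c : ι → ℝ} {i j : ι} {ε δ : ℝ}

theorem mul_le_abs_of_abs_le_one (a : ℝ) (hε : |ε| ≤ 1) : ε * a ≤ |a| :=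
  (le_abs_self _).trans <| by rw [abs_mul]; exact mul_le_of_le_one_left (abs_nonneg _) hε

theorem abs_add_abs_le_sum_abs (hij : i ≠ j) : |c i| + |c j| ≤ ∑ k, |c k| := by
  rw [← Finset.sum_pair (f := fun k => |c k|) hij]
  exact Finset.sum_le_univ_sum_of_nonneg fun _ => abs_nonneg _

theorem mul_add_mul_le_sum_abs (hij : i ≠ j) (hε : |ε| ≤ 1) (hδ : |δ| ≤ 1) :
    ε * c i + δ * c j ≤ ∑ k, |c k| := by
  linarith [mul_le_abs_of_abs_le_one (c i) hε, mul_le_abs_of_abs_le_one (c j) hδ,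
    abs_add_abs_le_sum_abs (c := c) hij]

theorem eq_zero_and_nonneg_of_mul_add_mul_eq_one (hs : ∑ k, |c k| ≤ 1) (hij : i ≠ j)
    (hε : |ε| ≤ 1) (hδ : |δ| ≤ 1) (h : ε * c i + δ * c j = 1) :
    (∀ k, k ≠ i → k ≠ j → c k = 0) ∧ 0 ≤ ε * c i ∧ 0 ≤ δ * c j := by
  have hi := mul_le_abs_of_abs_le_one (c i) hε
  have hj := mul_le_abs_of_abs_le_one (c j) hδ
  have hpair := abs_add_abs_le_sum_abs (c := c) hij
  refine ⟨fun k hki hkj => abs_eq_zero.mp ?_, by linarith [abs_nonneg (c i)],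
    by linarith [abs_nonneg (c j)]⟩
  have htriple := Finset.sum_le_univ_sum_of_nonneg (s := {k, i, j}) (f := fun k => |c k|)
    fun _ => abs_nonneg _
  rw [Finset.sum_insert (by simp [hki, hkj]), Finset.sum_pair hij] at htriple
  linarith [abs_nonneg (c k)]

theorem eq_or_eq_or_eq_of_abs_eq_one {γ : ℝ} (hε : |ε| = 1) (hδ : |δ| = 1) (hγ : |γ| = 1) :
    ε = δ ∨ ε = γ ∨ δ = γ := by
  rcases (abs_eq zero_le_one).1 hε with rfl | rfl <;>
  rcases (abs_eq zero_le_one).1 hδ with rfl | rfl <;>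
  rcases (abs_eq zero_le_one).1 hγ with rfl | rfl <;> norm_num

end SignedCoordinates

section CrossPolytope

variable {E ι : Type*} [AddCommGroup E] [Module ℝ E]

theorem exists_smul_of_mem_range_union_range_neg {v : ι → E} {w : E}
    (hw : w ∈ range v ∪ range (fun i => -v i)) : ∃ i, ∃ ε : ℝ, |ε| = 1 ∧ w = ε • v i := by
  rcases hw with ⟨i, rfl⟩ | ⟨i, rfl⟩
  · exact ⟨i, 1, abs_one, (one_smul ℝ _).symm⟩
  · exact ⟨i, -1, by simp, by simp⟩

theorem smul_mem_range_union_range_neg (v : ι → E) (i : ι) {ε : ℝ} (hε : |ε| = 1) :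
    ε • v i ∈ range v ∪ range (fun i => -v i) := by
  rcases abs_eq (zero_le_one' ℝ) |>.mp hε with rfl | rfl
  · exact Or.inl ⟨i, (one_smul ℝ _).symm⟩
  · exact Or.inr ⟨i, by simp⟩

theorem isExtreme_setOf_eq_of_forall_le {A : Set E} (f : E →ₗ[ℝ] ℝ) {c : ℝ}
    (hf : ∀ x ∈ A, f x ≤ c) : IsExtreme ℝ A {x ∈ A | f x = c} := by
  refine ⟨fun x hx => hx.1, ?_⟩
  rintro x₁ hx₁ x₂ hx₂ x ⟨-, hxc⟩ ⟨a, b, ha, hb, hab, rfl⟩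
  have hsum : a * f x₁ + b * f x₂ = c := by simpa using hxc
  have hbc := mul_le_mul_of_nonneg_left (hf x₂ hx₂) hb.le
  have hc : a * c + b * c = c := by rw [← add_mul, hab, one_mul]
  exact ⟨hx₁, le_antisymm (hf x₁ hx₁) <| le_of_mul_le_mul_left (by linarith) ha⟩

variable [Fintype ι] (B : Module.Basis ι ℝ E)

theorem sum_abs_repr_le_one_of_mem_convexHull {p : E}
    (hp : p ∈ convexHull ℝ (range B ∪ range (fun i => -B i))) : ∑ k, |B.repr p k| ≤ 1 := by
  have hconvex : ConvexOn ℝ univ fun p => ∑ k, |B.repr p k| := by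
    have := (convexOn_norm (E := PiLp 1 fun _ : ι => ℝ) convex_univ).comp_linearMap
      ((WithLp.linearEquiv 1 ℝ (ι → ℝ)).symm.toLinearMap ∘ₗ B.equivFun.toLinearMap)
    simpa [Function.comp_def, PiLp.norm_eq_of_L1] using this
  have hball : Convex ℝ {p | ∑ k, |B.repr p k| ≤ 1} := by simpa using hconvex.convex_le 1
  refine convexHull_min ?_ hball hp
  rintro x (⟨m, rfl⟩ | ⟨m, rfl⟩) <;>
  · classical
    simp only [mem_ofPred_eq, map_neg, Finsupp.neg_apply, B.repr_self, abs_neg]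
    rw [Finset.sum_eq_single m] <;> simp +contextual [Ne.symm]

variable {i j : ι} {ε δ : ℝ}

theorem mem_segment_of_mem_convexHull {q : E} (hij : i ≠ j) (hε : |ε| = 1) (hδ : |δ| = 1)
    (hq : q ∈ convexHull ℝ (range B ∪ range (fun i => -B i)))
    (hfq : ε * B.repr q i + δ * B.repr q j = 1) :
    q ∈ segment ℝ (ε • B i) (δ • B j) := by
  classical
  obtain ⟨hzero, hi, hj⟩ := eq_zero_and_nonneg_of_mul_add_mul_eq_one
    (sum_abs_repr_le_one_of_mem_convexHull B hq) hij hε.le hδ.le hfq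
  have hq : q = B.repr q i • B i + B.repr q j • B j := by
    conv_lhs => rw [← B.sum_repr q]
    exact Finset.sum_eq_add_of_mem i j (Finset.mem_univ _) (Finset.mem_univ _) hij
      fun k _ hk => by rw [hzero k hk.1 hk.2, zero_smul]
  have hεε : ε * ε = 1 := by rw [← abs_mul_abs_self, hε, one_mul]
  have hδδ : δ * δ = 1 := by rw [← abs_mul_abs_self, hδ, one_mul]
  refine ⟨_, _, hi, hj, hfq, ?_⟩
  rw [smul_smul, smul_smul, mul_right_comm, hεε, one_mul, mul_right_comm, hδδ, one_mul, ← hq]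

theorem isExtreme_convexHull_segment (hij : i ≠ j) (hε : |ε| = 1) (hδ : |δ| = 1) :
    IsExtreme ℝ (convexHull ℝ (range B ∪ range (fun i => -B i)))
      (segment ℝ (ε • B i) (δ • B j)) := by
  classical
  set f : E →ₗ[ℝ] ℝ := ε • B.coord i + δ • B.coord j
  have hf : ∀ q, f q = ε * B.repr q i + δ * B.repr q j := fun q => by simp [f]
  have hface : segment ℝ (ε • B i) (δ • B j) =
      {q ∈ convexHull ℝ (range B ∪ range (fun i => -B i)) | f q = 1} := by
    ext q
    refine ⟨fun hq => ⟨segment_subset_convexHull (smul_mem_range_union_range_neg _ i hε)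
      (smul_mem_range_union_range_neg _ j hδ) hq, ?_⟩,
      fun ⟨hq, hfq⟩ => mem_segment_of_mem_convexHull B hij hε hδ hq (hf q ▸ hfq)⟩
    obtain ⟨a, b, -, -, hab, rfl⟩ := hq
    have hεε : ε * ε = 1 := by rw [← abs_mul_abs_self, hε, one_mul]
    have hδδ : δ * δ = 1 := by rw [← abs_mul_abs_self, hδ, one_mul]
    simp only [hf, map_add, map_smul, B.repr_self, Finsupp.add_apply, Finsupp.smul_apply,
      Finsupp.single_eq_same, Finsupp.single_eq_of_ne hij, Finsupp.single_eq_of_ne hij.symm]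
    linear_combination a * hεε + b * hδδ + hab
  rw [hface]
  exact isExtreme_setOf_eq_of_forall_le f fun q hq => hf q ▸
    (mul_add_mul_le_sum_abs hij hε.le hδ.le).trans (sum_abs_repr_le_one_of_mem_convexHull B hq)

end CrossPolytope

open Set in
/-- For any subset `W` of the 16 vertices of the eight-dimensional cross-polytope
(a Delone polytope of `E8`) and `P = convexHull ℝ W`, every vertex of `P` fails to be
joined by an edge to at most one other vertex: for pairwise distinct `x, y, z ∈ W`,
at least one of the segments `[x, y]` and `[x, z]` is a face of `P`. -/
theorem stmt_16
    (b : Fin 8 → EuclideanSpace ℝ (Fin 8))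
    (hb : LinearIndependent ℝ b)
    (W : Set (EuclideanSpace ℝ (Fin 8)))
    (hW : W ⊆ range b ∪ range (fun i => -b i))
    (P : Set (EuclideanSpace ℝ (Fin 8)))
    (hP : P = convexHull ℝ W) :
    ∀ x ∈ W, ∀ y ∈ W, ∀ z ∈ W, x ≠ y → x ≠ z → y ≠ z →
      IsExtreme ℝ P (segment ℝ x y) ∨ IsExtreme ℝ P (segment ℝ x z) := by
  intro x hx y hy z hz hxy hxz hyz
  obtain ⟨B, rfl⟩ : ∃ B : Module.Basis (Fin 8) ℝ (EuclideanSpace ℝ (Fin 8)), ⇑B = b :=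
    ⟨_, coe_basisOfLinearIndependentOfCardEqFinrank hb (by simp)⟩
  obtain ⟨i, ε, hε, rfl⟩ := exists_smul_of_mem_range_union_range_neg (hW hx)
  obtain ⟨j, δ, hδ, rfl⟩ := exists_smul_of_mem_range_union_range_neg (hW hy)
  obtain ⟨k, γ, hγ, rfl⟩ := exists_smul_of_mem_range_union_range_neg (hW hz)
  have hedge {l : Fin 8} {η : ℝ} (hw : η • B l ∈ W) (hil : i ≠ l) (hη : |η| = 1) :
      IsExtreme ℝ P (segment ℝ (ε • B i) (η • B l)) :=
    hP ▸ (isExtreme_convexHull_segment B hil hε hη).mono (convexHull_mono hW)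
      (segment_subset_convexHull hx hw)
  by_cases hij : i = j
  · subst hij
    refine Or.inr (hedge hz (fun hik => ?_) hγ)
    subst hik
    rcases eq_or_eq_or_eq_of_abs_eq_one hε hδ hγ with rfl | rfl | rfl
    exacts [hxy rfl, hxz rfl, hyz rfl]
  · exact Or.inl (hedge hy hij hδ)
end
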